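/- Let α = (5−√5)/10 and let w(n) = ⌊(n+1)α⌋ − ⌊nα⌋ for n ∈ ℕ. Then for every n ≥ 0, d_1(n) = w(n+1), where d_1(n) is the digit of φ^1 in the canonical φ-representation of n. -/

import Mathlib

/-- The golden ratio φ = (1+√5)/2. -/
noncomputable def phi : ℝ := (1 + Real.sqrt 5) / 2

/-- `a` is a finite φ-representation of the real number `x`: a finitely supported
function `a : ℤ → {0,1}` with `x = Σ_{i ∈ ℤ} a(i) · φ^i`. -/
def IsPhiRep (x : ℝ) (a : ℤ →₀ ℕ) : Prop :=
  (∀ i, a i ≤ 1) ∧ x = ∑ i ∈ a.support, (a i : ℝ) * phi ^ i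

/-- `a` is the canonical φ-representation of `x`: a finite φ-representation with
no two adjacent digits equal to 1. -/
def IsCanonRep (x : ℝ) (a : ℤ →₀ ℕ) : Prop :=
  IsPhiRep x a ∧ ∀ i : ℤ, a i * a (i + 1) = 0

/-- α = (5 - √5)/10. -/
noncomputable def alpha : ℝ := (5 - Real.sqrt 5) / 10

/-- The Sturmian word based on α: `w(n) = ⌊(n+1)α⌋ - ⌊nα⌋`. -/
noncomputable def sturmianW (n : ℕ) : ℤ :=
  ⌊((n : ℝ) + 1) * alpha⌋ - ⌊(n : ℝ) * alpha⌋

/-!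
Write `n = ∑_{i ∈ S} φ^i`, `S` the support of the digits, and split `S` at position `1`.
The head `∑_{i ≥ 1} φ^i` is an element `t + sφ` of `ℤ[φ]`, and the tail `∑_{i ≤ 0} φ^i` lies in
`[0, 1)` if `1 ∈ S` and in `[0, φ)` otherwise. Since `ψ^i = ±φ^{-i}` with the sign given by the
parity of `i`, the conjugate `t + sψ` of the head lies in `(-1, -ψ²)` if `1 ∈ S` and in
`(-ψ², -ψ)` otherwise. These windows pin down the integer `k = n - 2t - s + 1` (`k = 2`, resp.
`k ∈ {1, 2}`), and the identity `((n + 1)α - t)√5 = -(kψ + t + sψ)` then puts `(n + 1)α - t` in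
`[1 - α, 1)`, resp. `[0, 1 - α)`: exactly the two cases `w(n + 1) = 1` and `w(n + 1) = 0`.
-/

open Real goldenRatio Finset

theorem goldenRatio_zpow_add_one (a : ℤ) : φ ^ (a + 1) = φ ^ a + φ ^ (a - 1) := by
  have h2 : φ ^ (a + 1) = φ ^ (a - 1) * φ ^ 2 := by
    rw [← zpow_natCast, ← zpow_add₀ goldenRatio_ne_zero]; ring_nf
  have h1 : φ ^ a = φ ^ (a - 1) * φ := by
    rw [← zpow_add_one₀ goldenRatio_ne_zero]; ring_nf
  rw [h2, h1, goldenRatio_sq]; ring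

theorem sum_goldenRatio_zpow_lt {T : Finset ℤ} (hT : ∀ i ∈ T, i + 1 ∉ T) {m : ℤ}
    (hm : ∀ i ∈ T, i ≤ m) : ∑ i ∈ T, φ ^ i < φ ^ (m + 1) := by
  induction T using Finset.induction_on_max generalizing m with
  | empty => simpa using zpow_pos goldenRatio_pos (m + 1)
  | insert a T ha ih =>
    have hT' : ∀ i ∈ T, i ≤ a - 2 := fun i hi => by
      have : i ≠ a - 1 := by rintro rfl; exact hT _ (mem_insert_of_mem hi) (by simp)
      have := ha i hi
      omega
    have hsum := ih (fun i hi h => hT i (mem_insert_of_mem hi) (mem_insert_of_mem h)) hT'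
    rw [show a - 2 + 1 = a - 1 by ring] at hsum
    calc ∑ i ∈ insert a T, φ ^ i = φ ^ a + ∑ i ∈ T, φ ^ i :=
          sum_insert fun h => (ha a h).false
      _ < φ ^ a + φ ^ (a - 1) := by linarith
      _ = φ ^ (a + 1) := (goldenRatio_zpow_add_one a).symm
      _ ≤ φ ^ (m + 1) := zpow_le_zpow_right₀ one_lt_goldenRatio.le
          (by linarith [hm a (mem_insert_self a T)])

theorem sum_goldenRatio_zpow_neg_lt {Q : Finset ℤ} (hQ : ∀ i ∈ Q, i + 1 ∉ Q) {m : ℤ}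
    (hm : ∀ i ∈ Q, m ≤ i) : ∑ i ∈ Q, φ ^ (-i) < φ ^ (1 - m) := by
  have h := sum_goldenRatio_zpow_lt (T := Q.map (Equiv.neg ℤ).toEmbedding) (m := -m)
    (by simp only [mem_map_equiv, Equiv.neg_symm, Equiv.neg_apply, neg_add_rev]
        intro i hi hi'
        exact hQ _ hi' (by simpa using hi))
    (by simp only [mem_map_equiv, Equiv.neg_symm, Equiv.neg_apply]
        intro i hi
        linarith [hm _ hi])
  rwa [sum_map, neg_add_eq_sub] at h

theorem sum_goldenConj_zpow_mem_Ioo {P : Finset ℤ} {ke ko : ℕ}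
    (he : ∀ i ∈ P, Even i → (ke : ℤ) < i) (ho : ∀ i ∈ P, Odd i → (ko : ℤ) < i) :
    ∑ i ∈ P, ψ ^ i ∈ Set.Ioo (-(-ψ) ^ ko) ((-ψ) ^ ke) := by
  have hψ : ψ = -φ⁻¹ := by rw [inv_goldenRatio, neg_neg]
  have hbound : ∀ k : ℕ, φ ^ (1 - ((k : ℤ) + 1)) = (-ψ) ^ k := fun k => by
    rw [show 1 - ((k : ℤ) + 1) = -k by ring, zpow_neg, zpow_natCast, ← inv_pow, inv_goldenRatio]
  have hE : ∑ i ∈ P.filter Even, ψ ^ i = ∑ i ∈ P.filter Even, φ ^ (-i) :=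
    sum_congr rfl fun i hi => by rw [hψ, (mem_filter.1 hi).2.neg_zpow, inv_zpow']
  have hO : ∑ i ∈ P.filter (¬Even ·), ψ ^ i = -∑ i ∈ P.filter (¬Even ·), φ ^ (-i) := by
    rw [← sum_neg_distrib]
    exact sum_congr rfl fun i hi => by
      rw [hψ, (Int.not_even_iff_odd.1 (mem_filter.1 hi).2).neg_zpow, inv_zpow']
  have hEb := sum_goldenRatio_zpow_neg_lt (Q := P.filter Even) (m := ke + 1)
    (fun i hi h => Int.even_add_one.1 (mem_filter.1 h).2 (mem_filter.1 hi).2)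
    (fun i hi => he i (mem_filter.1 hi).1 (mem_filter.1 hi).2)
  have hOb := sum_goldenRatio_zpow_neg_lt (Q := P.filter (¬Even ·)) (m := ko + 1)
    (fun i hi h => (mem_filter.1 h).2 (Int.even_add_one.2 (mem_filter.1 hi).2))
    (fun i hi => ho i (mem_filter.1 hi).1 (Int.not_even_iff_odd.1 (mem_filter.1 hi).2))
  rw [hbound] at hEb hOb
  have hE0 : 0 ≤ ∑ i ∈ P.filter Even, φ ^ (-i) :=
    sum_nonneg fun i _ => (zpow_pos goldenRatio_pos _).le
  have hO0 : 0 ≤ ∑ i ∈ P.filter (¬Even ·), φ ^ (-i) :=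
    sum_nonneg fun i _ => (zpow_pos goldenRatio_pos _).le
  rw [← sum_filter_add_sum_filter_not P Even, hE, hO]
  constructor <;> linarith

theorem exists_sum_zpow_eq (P : Finset ℤ) (hP : ∀ i ∈ P, 1 ≤ i) :
    ∃ t s : ℤ, ∑ i ∈ P, φ ^ i = t + s * φ ∧ ∑ i ∈ P, ψ ^ i = t + s * ψ := by
  have hsucc : ∀ i ∈ P, ∃ k : ℕ, i = k + 1 := fun i hi =>
    ⟨(i - 1).toNat, by have := hP i hi; omega⟩
  refine ⟨∑ i ∈ P, (Nat.fib (i - 1).toNat : ℤ), ∑ i ∈ P, (Nat.fib i.toNat : ℤ), ?_, ?_⟩ <;>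
    push_cast <;> rw [sum_mul, ← sum_add_distrib] <;> refine sum_congr rfl fun i hi => ?_ <;>
    obtain ⟨k, rfl⟩ := hsucc i hi <;>
    rw [add_sub_cancel_right, Int.toNat_natCast, ← Nat.cast_succ, Int.toNat_natCast, zpow_natCast]
  · rw [← goldenRatio_mul_fib_succ_add_fib]; ring
  · rw [← goldenConj_mul_fib_succ_add_fib]; ring

theorem exists_approx_of_one_mem {S : Finset ℤ} (hS : ∀ i ∈ S, i + 1 ∉ S) (h1 : 1 ∈ S) :
    ∃ t s : ℤ, ∑ i ∈ S, φ ^ i - (t + s * φ) ∈ Set.Ico 0 1 ∧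
      (t + s * ψ : ℝ) ∈ Set.Ioo (-1) (-ψ ^ 2) := by
  have h0 : (0 : ℤ) ∉ S := fun h => hS 0 h h1
  have h2 : (2 : ℤ) ∉ S := hS 1 h1
  obtain ⟨t, s, hφ, hψ⟩ := exists_sum_zpow_eq (S.filter (1 ≤ ·)) fun i hi => (mem_filter.1 hi).2
  refine ⟨t, s, ?_, ?_⟩
  · rw [← sum_filter_add_sum_filter_not S (1 ≤ ·), hφ, add_sub_cancel_left]
    refine ⟨sum_nonneg fun i _ => (zpow_pos goldenRatio_pos i).le, ?_⟩
    simpa using sum_goldenRatio_zpow_lt (m := -1)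
      (fun i hi h => hS i (mem_filter.1 hi).1 (mem_filter.1 h).1) fun i hi => by
        obtain ⟨hiS, hi1⟩ := mem_filter.1 hi
        have : i ≠ 0 := by rintro rfl; exact h0 hiS
        omega
  · have hmem : ∀ i ∈ (S.filter (1 ≤ ·)).erase 1, 2 < i := fun i hi => by
      obtain ⟨hi1, hiS, hile⟩ := by simpa using hi
      have : i ≠ 2 := by rintro rfl; exact h2 hiS
      omega
    obtain ⟨hlo, hhi⟩ := sum_goldenConj_zpow_mem_Ioo (P := (S.filter (1 ≤ ·)).erase 1) (ke := 3)
      (ko := 2) (fun i hi he => by have := hmem i hi; obtain ⟨j, rfl⟩ := he; push_cast; omega)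
      fun i hi _ => hmem i hi
    have hψ3 : ψ ^ 3 = 2 * ψ + 1 := by linear_combination (ψ + 1) * goldenConj_sq
    rw [← hψ, ← add_sum_erase _ _ (mem_filter.2 ⟨h1, le_rfl⟩), zpow_one]
    constructor <;> linarith [goldenConj_sq, hψ3]

theorem exists_approx_of_one_not_mem {S : Finset ℤ} (hS : ∀ i ∈ S, i + 1 ∉ S) (h1 : 1 ∉ S) :
    ∃ t s : ℤ, ∑ i ∈ S, φ ^ i - (t + s * φ) ∈ Set.Ico 0 φ ∧
      (t + s * ψ : ℝ) ∈ Set.Ioo (-ψ ^ 2) (-ψ) := by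
  obtain ⟨t, s, hφ, hψ⟩ := exists_sum_zpow_eq (S.filter (1 ≤ ·)) fun i hi => (mem_filter.1 hi).2
  refine ⟨t, s, ?_, ?_⟩
  · rw [← sum_filter_add_sum_filter_not S (1 ≤ ·), hφ, add_sub_cancel_left]
    refine ⟨sum_nonneg fun i _ => (zpow_pos goldenRatio_pos i).le, ?_⟩
    simpa using sum_goldenRatio_zpow_lt (m := 0)
      (fun i hi h => hS i (mem_filter.1 hi).1 (mem_filter.1 h).1) fun i hi => by
        have := (mem_filter.1 hi).2
        omega
  · have hmem : ∀ i ∈ S.filter (1 ≤ ·), 1 < i := fun i hi => by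
      obtain ⟨hiS, hile⟩ := mem_filter.1 hi
      have : i ≠ 1 := by rintro rfl; exact h1 hiS
      omega
    rw [← hψ]
    simpa using sum_goldenConj_zpow_mem_Ioo (P := S.filter (1 ≤ ·)) (ke := 1) (ko := 2)
      (fun i hi _ => hmem i hi) fun i hi ho => by
        have := hmem i hi; obtain ⟨j, rfl⟩ := ho; push_cast; omega

theorem IsCanonRep.eq_sum_support {x : ℝ} {a : ℤ →₀ ℕ} (h : IsCanonRep x a) :
    x = ∑ i ∈ a.support, φ ^ i := by
  rw [h.1.2]
  refine sum_congr rfl fun i hi => ?_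
  have : a i = 1 := by have := h.1.1 i; have := Finsupp.mem_support_iff.1 hi; omega
  rw [this, Nat.cast_one, one_mul]
  rfl

theorem IsCanonRep.add_one_notMem_support {x : ℝ} {a : ℤ →₀ ℕ} (h : IsCanonRep x a) :
    ∀ i ∈ a.support, i + 1 ∉ a.support := fun i hi hi1 =>
  (mul_ne_zero (Finsupp.mem_support_iff.1 hi) (Finsupp.mem_support_iff.1 hi1)) (h.2 i)

theorem IsCanonRep.exists_approx_of_digit_one {x : ℝ} {a : ℤ →₀ ℕ} (h : IsCanonRep x a)
    (h1 : a 1 = 1) : ∃ t s : ℤ, x - (t + s * φ) ∈ Set.Ico 0 1 ∧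
      (t + s * ψ : ℝ) ∈ Set.Ioo (-1) (-ψ ^ 2) := by
  rw [h.eq_sum_support]
  exact exists_approx_of_one_mem h.add_one_notMem_support (by simp [h1])

theorem IsCanonRep.exists_approx_of_digit_zero {x : ℝ} {a : ℤ →₀ ℕ} (h : IsCanonRep x a)
    (h0 : a 1 = 0) : ∃ t s : ℤ, x - (t + s * φ) ∈ Set.Ico 0 φ ∧
      (t + s * ψ : ℝ) ∈ Set.Ioo (-ψ ^ 2) (-ψ) := by
  rw [h.eq_sum_support]
  exact exists_approx_of_one_not_mem h.add_one_notMem_support (by simp [h0])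

theorem cast_sub_two_mul_sub_add_one (n t s : ℤ) :
    ((n - 2 * t - s + 1 : ℤ) : ℝ) = (n - (t + s * φ)) - (t + s * ψ) + 1 := by
  push_cast
  linear_combination (s : ℝ) * goldenRatio_add_goldenConj

theorem add_one_mul_alpha_sub_mul_sqrt_five (n t s : ℤ) :
    (((n : ℝ) + 1) * alpha - t) * √5 = -(((n - 2 * t - s + 1 : ℤ) : ℝ) * ψ + (t + s * ψ)) := by
  unfold alpha
  push_cast
  linear_combination (-((n : ℝ) + 1) / 10) * Real.sq_sqrt (show (0 : ℝ) ≤ 5 by norm_num)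

theorem one_sub_alpha_mul_sqrt_five : (1 - alpha) * √5 = φ := by
  unfold alpha
  linear_combination (1 / 10 : ℝ) * Real.sq_sqrt (show (0 : ℝ) ≤ 5 by norm_num)

theorem add_one_mul_alpha_sub_mem_of_digit_one {n t s : ℤ}
    (hu : (n : ℝ) - (t + s * φ) ∈ Set.Ico 0 1) (hY : (t + s * ψ : ℝ) ∈ Set.Ioo (-1) (-ψ ^ 2)) :
    ((n : ℝ) + 1) * alpha - t ∈ Set.Ico (1 - alpha) 1 := by
  have hk : n - 2 * t - s + 1 = 2 := by
    have hk := cast_sub_two_mul_sub_add_one n t s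
    have hlo : ((1 : ℤ) : ℝ) < ((n - 2 * t - s + 1 : ℤ) : ℝ) := by
      rw [hk]; push_cast; linarith [hu.1, hY.2, goldenConj_sq, neg_one_lt_goldenConj]
    have hhi : ((n - 2 * t - s + 1 : ℤ) : ℝ) < ((3 : ℤ) : ℝ) := by
      rw [hk]; push_cast; linarith [hu.2, hY.1]
    have := Int.cast_lt.1 hlo
    have := Int.cast_lt.1 hhi
    omega
  have key := add_one_mul_alpha_sub_mul_sqrt_five n t s
  rw [hk] at key
  push_cast at key
  have h5 : 0 < √5 := by positivity
  have hψ : 2 * ψ = 1 - √5 := by simp only [goldenConj]; ring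
  constructor
  · refine le_of_mul_le_mul_right ?_ h5
    rw [one_sub_alpha_mul_sqrt_five, key]
    linarith [hY.2, goldenConj_sq, goldenRatio_add_goldenConj]
  · refine lt_of_mul_lt_mul_right ?_ h5.le
    rw [one_mul, key]
    linarith [hY.1, hψ]

theorem add_one_mul_alpha_sub_mem_of_digit_zero {n t s : ℤ}
    (hu : (n : ℝ) - (t + s * φ) ∈ Set.Ico 0 φ) (hY : (t + s * ψ : ℝ) ∈ Set.Ioo (-ψ ^ 2) (-ψ)) :
    ((n : ℝ) + 1) * alpha - t ∈ Set.Ico 0 (1 - alpha) := by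
  have hk := cast_sub_two_mul_sub_add_one n t s
  have hk12 : (1 : ℝ) ≤ ((n - 2 * t - s + 1 : ℤ) : ℝ) ∧ ((n - 2 * t - s + 1 : ℤ) : ℝ) ≤ 2 := by
    have hlo : ((0 : ℤ) : ℝ) < ((n - 2 * t - s + 1 : ℤ) : ℝ) := by
      rw [hk]; push_cast; linarith [hu.1, hY.2, goldenConj_sq, neg_one_lt_goldenConj]
    have hhi : ((n - 2 * t - s + 1 : ℤ) : ℝ) < ((3 : ℤ) : ℝ) := by
      rw [hk]; push_cast; linarith [hu.2, hY.1, goldenConj_sq, goldenRatio_add_goldenConj]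
    have := Int.cast_lt.1 hlo
    have := Int.cast_lt.1 hhi
    constructor <;> exact_mod_cast (by omega)
  have key := add_one_mul_alpha_sub_mul_sqrt_five n t s
  have h5 : 0 < √5 := by positivity
  have hψ := goldenConj_neg.le
  constructor
  · refine nonneg_of_mul_nonneg_left ?_ h5
    rw [key]
    linarith [hY.2, mul_nonneg (sub_nonneg.2 hk12.1) (neg_nonneg.2 hψ)]
  · refine lt_of_mul_lt_mul_right ?_ h5.le
    rw [one_sub_alpha_mul_sqrt_five, key]
    linarith [hY.1, mul_nonneg (sub_nonneg.2 hk12.2) (neg_nonneg.2 hψ), goldenConj_sq,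
      goldenRatio_add_goldenConj]

theorem alpha_mem_Icc : alpha ∈ Set.Icc 0 1 := by
  have : √5 < 5 := by rw [Real.sqrt_lt' (by norm_num)]; norm_num
  unfold alpha
  constructor <;> linarith [Real.sqrt_nonneg 5]

theorem floor_add_sub_floor_eq_one {x β : ℝ} {t : ℤ} (hβ : β ≤ 1)
    (h : x - t ∈ Set.Ico (1 - β) 1) : ⌊x + β⌋ - ⌊x⌋ = 1 := by
  rw [Int.floor_eq_iff.2 (⟨by linarith [h.1], by linarith [h.2]⟩ : (t : ℝ) ≤ x ∧ x < t + 1),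
    Int.floor_eq_iff.2 (⟨by push_cast; linarith [h.1], by push_cast; linarith [h.2]⟩ :
      ((t + 1 : ℤ) : ℝ) ≤ x + β ∧ x + β < (t + 1 : ℤ) + 1)]
  ring

theorem floor_add_sub_floor_eq_zero {x β : ℝ} {t : ℤ} (hβ : 0 ≤ β)
    (h : x - t ∈ Set.Ico 0 (1 - β)) : ⌊x + β⌋ - ⌊x⌋ = 0 := by
  rw [Int.floor_eq_iff.2 (⟨by linarith [h.1], by linarith [h.2]⟩ : (t : ℝ) ≤ x ∧ x < t + 1),
    Int.floor_eq_iff.2 (⟨by linarith [h.1], by linarith [h.2]⟩ : (t : ℝ) ≤ x + β ∧ x + β < t + 1),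
    sub_self]

theorem sturmianW_eq_one {m : ℕ} {t : ℤ} (h : (m : ℝ) * alpha - t ∈ Set.Ico (1 - alpha) 1) :
    sturmianW m = 1 := by
  rw [sturmianW, add_one_mul, floor_add_sub_floor_eq_one alpha_mem_Icc.2 h]

theorem sturmianW_eq_zero {m : ℕ} {t : ℤ} (h : (m : ℝ) * alpha - t ∈ Set.Ico 0 (1 - alpha)) :
    sturmianW m = 0 := by
  rw [sturmianW, add_one_mul, floor_add_sub_floor_eq_zero alpha_mem_Icc.1 h]

/-- For `n ≥ 0`, the digit of φ¹ in the canonical φ-representation of `n` equals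
`w(n+1)`. Here `d n` denotes the canonical φ-representation of `n`. -/
theorem d1_eq_sturmian
    (d : ℕ → ℤ →₀ ℕ) (hd : ∀ n : ℕ, IsCanonRep n (d n)) (n : ℕ) :
    (d n 1 : ℤ) = sturmianW (n + 1) := by
  rcases Nat.le_one_iff_eq_zero_or_eq_one.1 ((hd n).1.1 1) with h | h
  · obtain ⟨t, s, hu, hY⟩ := (hd n).exists_approx_of_digit_zero h
    have := add_one_mul_alpha_sub_mem_of_digit_zero (n := n) (by exact_mod_cast hu) hY
    rw [h, sturmianW_eq_zero (t := t) (by exact_mod_cast this)]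
    rfl
  · obtain ⟨t, s, hu, hY⟩ := (hd n).exists_approx_of_digit_one h
    have := add_one_mul_alpha_sub_mem_of_digit_one (n := n) (by exact_mod_cast hu) hY
    rw [h, sturmianW_eq_one (t := t) (by exact_mod_cast this)]
    rfl
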